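/- arXiv:2512.11891 — 2 statements merged into one kernel-verified Lean document; each statement's English description precedes it below -/
import Mathlib

section
/- Let A, B ∈ ℝ^{d×d} be symmetric positive definite, c, o ∈ ℝ^d, and let p_s ∈ ℝ^d be a unit vector. Then for every x ∈ E(A,c) and every y ∈ E(B,o), one has ‖x − y‖ ≥ h(A,c,B,o,p_s). In particular, the barrier value h(A,c,B,o,p_s) is a lower bound for the Euclidean distance between the two ellipsoids. -/
/-!
Put `n = A⁻¹ p_s`, `x = c + A s` and `y = o + B t`. Since `A` and `B` are symmetric,
`⟪A s, n⟫ = ⟪s, p_s⟫ ≤ 1` and `⟪B t, n⟫ = ⟪t, B n⟫ ≥ -‖B n‖`, so `⟪y - x, n⟫` is at least the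
numerator of the barrier, while Cauchy–Schwarz bounds it above by `‖x - y‖ ‖n‖`.
-/

open scoped RealInnerProductSpace

/-- The linear action of a matrix `A` on `EuclideanSpace ℝ (Fin d)`. -/
noncomputable def mv {d : ℕ} (A : Matrix (Fin d) (Fin d) ℝ)
    (x : EuclideanSpace ℝ (Fin d)) : EuclideanSpace ℝ (Fin d) :=
  (WithLp.equiv 2 (Fin d → ℝ)).symm (A.mulVec ((WithLp.equiv 2 (Fin d → ℝ)) x))

/-- The ellipsoid `E(A, c) = {c + A·s : ‖s‖ ≤ 1}`. -/
noncomputable def ellipsoid {d : ℕ} (A : Matrix (Fin d) (Fin d) ℝ)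
    (c : EuclideanSpace ℝ (Fin d)) : Set (EuclideanSpace ℝ (Fin d)) :=
  {y | ∃ s : EuclideanSpace ℝ (Fin d), ‖s‖ ≤ 1 ∧ y = c + mv A s}

/-- The barrier value `h(A,c,B,o,p_s) = (−‖B·n‖ + ⟪o − c, n⟫ − 1)/‖n‖` with
`n = A⁻¹·p_s` (Eq. (9) of the paper). -/
noncomputable def barrier {d : ℕ} (A : Matrix (Fin d) (Fin d) ℝ)
    (c : EuclideanSpace ℝ (Fin d)) (B : Matrix (Fin d) (Fin d) ℝ)
    (o : EuclideanSpace ℝ (Fin d)) (ps : EuclideanSpace ℝ (Fin d)) : ℝ :=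
  (-‖mv B (mv A⁻¹ ps)‖ + ⟪o - c, mv A⁻¹ ps⟫ - 1) / ‖mv A⁻¹ ps‖

section InnerProductSpace

variable {E : Type*} [NormedAddCommGroup E] [InnerProductSpace ℝ E]

theorem LinearMap.IsSymmetric.abs_inner_apply_le_norm_apply {T : E →ₗ[ℝ] E} (hT : T.IsSymmetric)
    {s : E} (hs : ‖s‖ ≤ 1) (n : E) : |⟪T s, n⟫| ≤ ‖T n‖ :=
  calc |⟪T s, n⟫| = |⟪s, T n⟫| := by rw [hT s n]
    _ ≤ ‖s‖ * ‖T n‖ := abs_real_inner_le_norm s (T n)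
    _ ≤ ‖T n‖ := mul_le_of_le_one_left (norm_nonneg _) hs

theorem inner_sub_sub_norm_sub_norm_le_norm_sub_mul_norm {S T : E →ₗ[ℝ] E}
    (hS : S.IsSymmetric) (hT : T.IsSymmetric) {s t : E} (hs : ‖s‖ ≤ 1) (ht : ‖t‖ ≤ 1)
    (c o n : E) :
    ⟪o - c, n⟫ - ‖T n‖ - ‖S n‖ ≤ ‖(c + S s) - (o + T t)‖ * ‖n‖ := by
  have hSs := abs_le.mp (hS.abs_inner_apply_le_norm_apply hs n)
  have hTt := abs_le.mp (hT.abs_inner_apply_le_norm_apply ht n)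
  calc ⟪o - c, n⟫ - ‖T n‖ - ‖S n‖ ≤ ⟪o - c, n⟫ + ⟪T t, n⟫ - ⟪S s, n⟫ := by linarith
    _ = ⟪(o + T t) - (c + S s), n⟫ := by
      simp only [inner_sub_left, inner_add_left]
      ring
    _ ≤ ‖(o + T t) - (c + S s)‖ * ‖n‖ := real_inner_le_norm _ _
    _ = ‖(c + S s) - (o + T t)‖ * ‖n‖ := by rw [norm_sub_rev]

end InnerProductSpace

theorem mv_eq_toEuclideanLin {d : ℕ} (A : Matrix (Fin d) (Fin d) ℝ) (x : EuclideanSpace ℝ (Fin d)) :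
    mv A x = A.toEuclideanLin x :=
  rfl

theorem mv_mv_nonsing_inv {d : ℕ} (A : Matrix (Fin d) (Fin d) ℝ) (hA : IsUnit A.det)
    (x : EuclideanSpace ℝ (Fin d)) : mv A (mv A⁻¹ x) = x := by
  simp [mv, Matrix.mulVec_mulVec, Matrix.mul_nonsing_inv A hA]

/-- The barrier value `h(A,c,B,o,p_s)` is a lower bound for
the Euclidean distance between the two ellipsoids: for every `x ∈ E(A,c)` and
`y ∈ E(B,o)` one has `‖x − y‖ ≥ h(A,c,B,o,p_s)`. -/
theorem stmt5 {d : ℕ} (A B : Matrix (Fin d) (Fin d) ℝ)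
    (hA : A.PosDef) (hB : B.PosDef)
    (c o ps : EuclideanSpace ℝ (Fin d)) (hps : ‖ps‖ = 1) :
    ∀ x ∈ ellipsoid A c, ∀ y ∈ ellipsoid B o, ‖x - y‖ ≥ barrier A c B o ps := by
  rintro x ⟨s, hs, rfl⟩ y ⟨t, ht, rfl⟩
  set n := mv A⁻¹ ps
  have hAn : ‖mv A n‖ = 1 := by rw [mv_mv_nonsing_inv A hA.det_pos.ne'.isUnit, hps]
  have hproj := inner_sub_sub_norm_sub_norm_le_norm_sub_mul_norm
    (Matrix.isSymmetric_toEuclideanLin_iff.mpr hA.isHermitian)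
    (Matrix.isSymmetric_toEuclideanLin_iff.mpr hB.isHermitian) hs ht c o n
  simp only [← mv_eq_toEuclideanLin] at hproj
  rw [ge_iff_le, barrier]
  exact div_le_of_le_mul₀ (norm_nonneg _) (norm_nonneg _) (by linarith)
end

section
/- Let d ≥ 1, t₀ ∈ ℝ, and k > 0. Let P : ℝ → ℝ^{d×d} and c : ℝ → ℝ^d be such that P(t) is symmetric positive definite for every t ≥ t₀ (the time-varying end-effector ellipsoid), let B ∈ ℝ^{d×d} be symmetric positive definite and o ∈ ℝ^d (the obstacle ellipsoid), and let p_s : ℝ → ℝ^d satisfy ‖p_s(t)‖ = 1 for all t ≥ t₀ (the virtual auxiliary state). Define H(t) := h(P(t), c(t), B, o, p_s(t)). Assume H is differentiable on [t₀, ∞), H(t₀) > 0, and H'(t) ≥ −k·H(t) for all t ≥ t₀. Then for every t ≥ t₀ and for all sets S_A ⊆ E(P(t), c(t)) and S_O ⊆ E(B, o), we have S_A ∩ S_O = ∅; in particular, the physical end-effector (enclosed in E(P(t), c(t))) never collides with the obstacle (enclosed in E(B, o)). -/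
/-!
The support function of `ellipsoid A c` in a direction `n` is `⟪c, n⟫ + ‖A n‖`. With
`n = A⁻¹ p_s` and `‖p_s‖ ≤ 1`, positivity of the barrier says
`⟪c, n⟫ + ‖A n‖ < ⟪o, n⟫ - ‖B n‖`, so the hyperplane orthogonal to `n` strictly separates
the two ellipsoids. Positivity of `H` is propagated in time by Grönwall's inequality:
`H' ≥ -k H` gives `H t ≥ H t₀ · exp (-k (t - t₀)) > 0`.
-/

open scoped RealInnerProductSpace

open Set Real

theorem mul_exp_le_of_hasDerivWithinAt_ge_mul {f f' : ℝ → ℝ} {a K : ℝ}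
    (hf : ∀ x ∈ Ici a, HasDerivWithinAt f (f' x) (Ici a) x)
    (hbound : ∀ x ∈ Ici a, K * f x ≤ f' x) {x : ℝ} (hx : a ≤ x) :
    f a * exp (K * (x - a)) ≤ f x := by
  have hcont : ContinuousOn (-f) (Icc a x) := fun y hy =>
    ((hf y hy.1).continuousWithinAt.mono Icc_subset_Ici_self).neg
  have hderiv : ∀ y ∈ Ico a x, HasDerivWithinAt (-f) (-f' y) (Ici y) y := fun y hy =>
    ((hf y hy.1).mono (Ici_subset_Ici.2 hy.1)).neg
  have hgronwall := le_gronwallBound_of_liminf_deriv_right_le (δ := -f a) (K := K) (ε := 0) hcont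
    (fun y hy _ hr => (hderiv y hy).liminf_right_slope_le hr) le_rfl
    (fun y hy => by simp only [Pi.neg_apply, add_zero, mul_neg]; linarith [hbound y hy.1])
    x ⟨hx, le_rfl⟩
  rw [gronwallBound_ε0] at hgronwall
  simp only [Pi.neg_apply, neg_mul] at hgronwall
  linarith

section Ellipsoid

variable {d : ℕ} {A B : Matrix (Fin d) (Fin d) ℝ}

theorem mv_mv_inv (hA : IsUnit A.det) (x : EuclideanSpace ℝ (Fin d)) : mv A (mv A⁻¹ x) = x := by
  simp [mv, Matrix.mulVec_mulVec, Matrix.mul_nonsing_inv _ hA]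

theorem Matrix.IsHermitian.inner_mv_left (hA : A.IsHermitian) (x y : EuclideanSpace ℝ (Fin d)) :
    ⟪mv A x, y⟫ = ⟪x, mv A y⟫ :=
  Matrix.isSymmetric_toEuclideanLin_iff.2 hA x y

theorem abs_inner_sub_le_of_mem_ellipsoid (hA : A.IsHermitian) {c y : EuclideanSpace ℝ (Fin d)}
    (hy : y ∈ ellipsoid A c) (n : EuclideanSpace ℝ (Fin d)) : |⟪y - c, n⟫| ≤ ‖mv A n‖ := by
  obtain ⟨s, hs, rfl⟩ := hy
  rw [add_sub_cancel_left, hA.inner_mv_left]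
  calc |⟪s, mv A n⟫| ≤ ‖s‖ * ‖mv A n‖ := abs_real_inner_le_norm _ _
    _ ≤ ‖mv A n‖ := mul_le_of_le_one_left (norm_nonneg _) hs

theorem disjoint_ellipsoid_of_barrier_pos (hA : A.IsHermitian) (hA' : IsUnit A.det)
    (hB : B.IsHermitian) {c o ps : EuclideanSpace ℝ (Fin d)} (hps : ‖ps‖ ≤ 1)
    (h : 0 < barrier A c B o ps) : Disjoint (ellipsoid A c) (ellipsoid B o) := by
  set n := mv A⁻¹ ps
  have hsep : 1 + ‖mv B n‖ < ⟪o - c, n⟫ := by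
    rcases div_pos_iff.1 h with ⟨hnum, -⟩ | ⟨-, hneg⟩
    · linarith
    · exact absurd hneg (norm_nonneg n).not_gt
  rw [Set.disjoint_left]
  intro y hyA hyB
  have hA_supp := abs_inner_sub_le_of_mem_ellipsoid hA hyA n
  have hB_supp := abs_inner_sub_le_of_mem_ellipsoid hB hyB n
  rw [mv_mv_inv hA'] at hA_supp
  have hsplit : ⟪o - c, n⟫ = ⟪y - c, n⟫ - ⟪y - o, n⟫ := by
    rw [← inner_sub_left, sub_sub_sub_cancel_left]
  linarith [le_abs_self ⟪y - c, n⟫, neg_abs_le ⟪y - o, n⟫]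

end Ellipsoid

theorem stmt12_general {d : ℕ} (t₀ k : ℝ)
    (P : ℝ → Matrix (Fin d) (Fin d) ℝ) (c : ℝ → EuclideanSpace ℝ (Fin d))
    (hP : ∀ t ∈ Set.Ici t₀, (P t).PosDef)
    (B : Matrix (Fin d) (Fin d) ℝ) (hB : B.PosDef)
    (o : EuclideanSpace ℝ (Fin d))
    (ps : ℝ → EuclideanSpace ℝ (Fin d)) (hps : ∀ t ∈ Set.Ici t₀, ‖ps t‖ = 1)
    (H H' : ℝ → ℝ) (hHdef : ∀ t, H t = barrier (P t) (c t) B o (ps t))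
    (hderiv : ∀ t ∈ Set.Ici t₀, HasDerivWithinAt H (H' t) (Set.Ici t₀) t)
    (hH0 : H t₀ > 0)
    (hineq : ∀ t ∈ Set.Ici t₀, H' t ≥ -k * H t) :
    ∀ t ∈ Set.Ici t₀,
      ∀ SA ⊆ ellipsoid (P t) (c t), ∀ SO ⊆ ellipsoid B o, SA ∩ SO = ∅ := by
  intro t ht SA hSA SO hSO
  have hHt : 0 < H t :=
    (mul_pos hH0 (exp_pos _)).trans_le (mul_exp_le_of_hasDerivWithinAt_ge_mul hderiv hineq ht)
  have hdisj : Disjoint (ellipsoid (P t) (c t)) (ellipsoid B o) :=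
    disjoint_ellipsoid_of_barrier_pos (hP t ht).1 (hP t ht).det_pos.ne'.isUnit hB.1
      (hps t ht).le (hHdef t ▸ hHt)
  exact Set.disjoint_iff_inter_eq_empty.1 (hdisj.mono hSA hSO)

/-- **Theorem 1 of the paper, AEGIS safety guarantee.**
With a time-varying end-effector ellipsoid `E(P t, c t)`, a fixed obstacle
ellipsoid `E(B, o)`, and a unit virtual state `p_s t`, let
`H t = h(P t, c t, B, o, p_s t)` be the barrier value. If `H` is
differentiable on `[t₀, ∞)`, `H t₀ > 0`, and `H' t ≥ −k·H t` for all
`t ≥ t₀` (with `k > 0`), then for every `t ≥ t₀` any set contained in the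
end-effector ellipsoid is disjoint from any set contained in the obstacle
ellipsoid: the physical end-effector never collides with the obstacle. -/
theorem stmt12 {d : ℕ} (hd : 1 ≤ d) (t₀ k : ℝ) (hk : 0 < k)
    (P : ℝ → Matrix (Fin d) (Fin d) ℝ) (c : ℝ → EuclideanSpace ℝ (Fin d))
    (hP : ∀ t ∈ Set.Ici t₀, (P t).PosDef)
    (B : Matrix (Fin d) (Fin d) ℝ) (hB : B.PosDef)
    (o : EuclideanSpace ℝ (Fin d))
    (ps : ℝ → EuclideanSpace ℝ (Fin d)) (hps : ∀ t ∈ Set.Ici t₀, ‖ps t‖ = 1)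
    (H H' : ℝ → ℝ) (hHdef : ∀ t, H t = barrier (P t) (c t) B o (ps t))
    (hderiv : ∀ t ∈ Set.Ici t₀, HasDerivWithinAt H (H' t) (Set.Ici t₀) t)
    (hH0 : H t₀ > 0)
    (hineq : ∀ t ∈ Set.Ici t₀, H' t ≥ -k * H t) :
    ∀ t ∈ Set.Ici t₀,
      ∀ SA ⊆ ellipsoid (P t) (c t), ∀ SO ⊆ ellipsoid B o, SA ∩ SO = ∅ :=
  stmt12_general t₀ k P c hP B hB o ps hps H H' hHdef hderiv hH0 hineq
end
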